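/- Let f : I \ D → I be a piecewise C¹ expanding map with finitely many monotone branches I₁,…,I_l, |f'| ≥ σ > 2 on each branch, and I \ (⋃_j I_j) finite. Then for each δ > 0 there exists n = n(δ) ∈ ℕ such that every open interval J ⊆ ⋃_j I_j with |J| ≥ δ admits 0 ≤ k ≤ n, a subinterval Ĵ ⊆ J, and a branch index 1 ≤ j ≤ l with f^k|Ĵ : Ĵ → I_j a diffeomorphism (onto the whole branch domain I_j). -/

import Mathlib

/-!
By the mean value theorem, an interval `J` inside a branch is mapped injectively by `f` onto an
interval at least `σ` times as long. If `f(J)` contains no whole branch, the midpoint of `f(J)` is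
approached from the left by a branch (the branches cover `[0, 1]` up to finitely many points), and
that branch sticks out of `f(J)` on one side, so it contains one of the two halves of `f(J)`.
Either way `f(J)` contains a whole branch or a piece of a single branch of length `≥ (σ/2)|J|`.
Since `σ/2 > 1` and `f(J) ⊆ [0, 1]`, a whole branch is reached after boundedly many steps, and it
pulls back to a subinterval of `J` because `f` is a continuous injection on each branch.
-/

open Set Metric Topology Function

theorem IsPreconnected.exists_subset_of_subset_iUnion {X ι : Type*} [TopologicalSpace X]
    {s : Set X} {U : ι → Set X} (hs : IsPreconnected s) (hne : s.Nonempty)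
    (hU : ∀ i, IsOpen (U i)) (hdisj : Pairwise (Disjoint on U)) (hsU : s ⊆ ⋃ i, U i) :
    ∃ i, s ⊆ U i := by
  obtain ⟨x, hx⟩ := hne
  obtain ⟨i, hxi⟩ := mem_iUnion.1 (hsU hx)
  refine ⟨i, hs.subset_left_of_subset_union (hU i) (isOpen_biUnion fun j _ => hU j)
    (disjoint_iUnion₂_right.2 fun j hj => hdisj (Ne.symm hj)) (fun y hy => ?_) ⟨x, hx, hxi⟩⟩
  obtain ⟨j, hyj⟩ := mem_iUnion.1 (hsU hy)
  by_cases hji : j = i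
  · exact Or.inl (hji ▸ hyj)
  · exact Or.inr (mem_biUnion hji hyj)

theorem IsOpen.eq_Ioo_csInf_csSup {α : Type*} [ConditionallyCompleteLinearOrder α]
    [TopologicalSpace α] [OrderTopology α] [DenselyOrdered α] [NoMinOrder α] [NoMaxOrder α]
    {s : Set α} (ho : IsOpen s) (hc : IsConnected s) (hb : BddBelow s) (ha : BddAbove s) :
    s = Ioo (sInf s) (sSup s) :=
  (interior_Icc (a := sInf s) ▸ interior_maximal (subset_Icc_csInf_csSup hb ha) ho).antisymm
    (hc.Ioo_csInf_csSup_subset hb ha)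

theorem ContinuousOn.isOpen_image_Ioo_of_injOn {f : ℝ → ℝ} {c d : ℝ}
    (hf : ContinuousOn f (Ioo c d)) (hinj : InjOn f (Ioo c d)) : IsOpen (f '' Ioo c d) := by
  rw [isOpen_iff_forall_mem_open]
  rintro _ ⟨x, hx, rfl⟩
  obtain ⟨x₁, hcx₁, hx₁x⟩ := exists_between hx.1
  obtain ⟨x₂, hxx₂, hx₂d⟩ := exists_between hx.2
  have hsub : Icc x₁ x₂ ⊆ Ioo c d := Icc_subset_Ioo hcx₁ hx₂d
  have hle : x₁ ≤ x₂ := (hx₁x.trans hxx₂).le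
  have hIoo : f '' Ioo x₁ x₂ ⊆ f '' Ioo c d := image_mono (Ioo_subset_Icc_self.trans hsub)
  rcases hf.strictMonoOn_of_injOn_Ioo (hcx₁.trans hx₁x |>.trans hx.2) hinj with hmono | hanti
  · refine ⟨Ioo (f x₁) (f x₂), ?_, isOpen_Ioo, hmono (hsub ⟨le_rfl, hle⟩) hx hx₁x,
      hmono hx (hsub ⟨hle, le_rfl⟩) hxx₂⟩
    rwa [← (hf.mono hsub).image_Ioo_of_strictMonoOn hle (hmono.mono hsub)]
  · refine ⟨Ioo (f x₂) (f x₁), ?_, isOpen_Ioo, hanti hx (hsub ⟨hle, le_rfl⟩) hxx₂,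
      hanti (hsub ⟨le_rfl, hle⟩) hx hx₁x⟩
    rwa [← (hf.mono hsub).image_Ioo_of_strictAntiOn hle (hanti.mono hsub)]

theorem ContinuousOn.exists_image_Ioo_eq_Ioo {f : ℝ → ℝ} {c d : ℝ} (hcd : c < d)
    (hf : ContinuousOn f (Ioo c d)) (hinj : InjOn f (Ioo c d))
    (hb : Bornology.IsBounded (f '' Ioo c d)) : ∃ A B, f '' Ioo c d = Ioo A B :=
  ⟨_, _, (hf.isOpen_image_Ioo_of_injOn hinj).eq_Ioo_csInf_csSup
    ((isConnected_Ioo hcd).image f hf) hb.bddBelow hb.bddAbove⟩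

theorem Metric.mul_diam_le_diam_image {α β : Type*} [PseudoMetricSpace α] [PseudoMetricSpace β]
    {f : α → β} {s : Set α} {σ : ℝ} (hσ : 0 < σ) (hb : Bornology.IsBounded (f '' s))
    (h : ∀ x ∈ s, ∀ y ∈ s, σ * dist x y ≤ dist (f x) (f y)) : σ * diam s ≤ diam (f '' s) := by
  rw [← le_div_iff₀' hσ]
  refine diam_le_of_forall_dist_le (div_nonneg diam_nonneg hσ.le) fun x hx y hy => ?_
  rw [le_div_iff₀' hσ]
  exact (h x hx y hy).trans (dist_le_diam_of_mem hb (mem_image_of_mem f hx) (mem_image_of_mem f hy))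

theorem mul_dist_le_dist_of_le_abs_deriv {f : ℝ → ℝ} {s : Set ℝ} {σ : ℝ} (hs : s.OrdConnected)
    (hf : DifferentiableOn ℝ f s) (hσ : ∀ x ∈ s, σ ≤ |deriv f x|) {x y : ℝ} (hx : x ∈ s)
    (hy : y ∈ s) : σ * dist x y ≤ dist (f x) (f y) := by
  wlog hxy : x < y generalizing x y
  · rcases (not_lt.1 hxy).eq_or_lt with rfl | hyx
    · simp
    · rw [dist_comm x, dist_comm (f x)]
      exact this hy hx hyx
  have hIcc : Icc x y ⊆ s := hs.out hx hy
  obtain ⟨ξ, hξ, hslope⟩ := exists_deriv_eq_slope f hxy (hf.mono hIcc).continuousOn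
    (hf.mono (Ioo_subset_Icc_self.trans hIcc))
  have hξσ := hσ ξ (hIcc (Ioo_subset_Icc_self hξ))
  rw [hslope, abs_div, abs_of_pos (sub_pos.2 hxy), le_div_iff₀ (sub_pos.2 hxy)] at hξσ
  rwa [Real.dist_eq, Real.dist_eq, abs_sub_comm, abs_of_pos (sub_pos.2 hxy), abs_sub_comm]

def Covers (g : ℝ → ℝ) (c d e e' : ℝ) : Prop :=
  ∃ p q, c ≤ p ∧ p < q ∧ q ≤ d ∧ BijOn g (Ioo p q) (Ioo e e')

theorem covers_of_surjOn {g : ℝ → ℝ} {c d e e' : ℝ} (hg : ContinuousOn g (Ioo c d))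
    (hinj : InjOn g (Ioo c d)) (hsurj : SurjOn g (Ioo c d) (Ioo e e')) (hee' : e < e') :
    Covers g c d e e' := by
  set S := Ioo c d ∩ g ⁻¹' Ioo e e'
  have hne : S.Nonempty := by
    obtain ⟨y, hy⟩ := nonempty_Ioo.2 hee'
    obtain ⟨x, hx, rfl⟩ := hsurj hy
    exact ⟨x, hx, hy⟩
  have hcd : c < d := by
    obtain ⟨x, hx, -⟩ := hne
    exact hx.1.trans hx.2
  have hord : S.OrdConnected := by
    obtain ⟨u, hu, hSu⟩ : ∃ u, u.OrdConnected ∧ S = Ioo c d ∩ u :=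
      (hg.strictMonoOn_of_injOn_Ioo hcd hinj).elim
      (fun h => ordConnected_Ioo.preimage_monotoneOn h.monotoneOn)
      (fun h => ordConnected_Ioo.preimage_antitoneOn h.antitoneOn)
    rw [hSu]
    exact ordConnected_Ioo.inter hu
  have hS : S = Ioo (sInf S) (sSup S) :=
    (hg.isOpen_inter_preimage isOpen_Ioo isOpen_Ioo).eq_Ioo_csInf_csSup ⟨hne, hord.isPreconnected⟩
      (bddBelow_Ioo.mono inter_subset_left) (bddAbove_Ioo.mono inter_subset_left)
  have hpq : sInf S < sSup S := by
    obtain ⟨x, hx⟩ := hne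
    rw [hS] at hx
    exact hx.1.trans hx.2
  obtain ⟨hcp, hqd⟩ := (Ioo_subset_Ioo_iff hpq).1 (hS ▸ inter_subset_left : _ ⊆ Ioo c d)
  refine ⟨sInf S, sSup S, hcp, hpq, hqd, ?_⟩
  rw [← hS]
  refine ⟨fun x hx => hx.2, hinj.mono inter_subset_left, fun y hy => ?_⟩
  obtain ⟨x, hx, rfl⟩ := hsurj hy
  exact ⟨x, ⟨hx, hy⟩, rfl⟩

theorem Covers.comp {f h : ℝ → ℝ} {c d g g' e e' : ℝ} (hfc : ContinuousOn f (Ioo c d))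
    (hfi : InjOn f (Ioo c d)) (hf : Covers f c d g g') (hh : Covers h g g' e e') :
    Covers (h ∘ f) c d e e' := by
  obtain ⟨p, q, hcp, -, hqd, hbij⟩ := hf
  obtain ⟨p', q', hgp', hpq', hqg', hbij'⟩ := hh
  have hsub : Ioo p q ⊆ Ioo c d := Ioo_subset_Ioo hcp hqd
  obtain ⟨r, s, hpr, hrs, hsq, hbij''⟩ := covers_of_surjOn (hfc.mono hsub) (hfi.mono hsub)
    (hbij.surjOn.mono subset_rfl (Ioo_subset_Ioo hgp' hqg')) hpq'
  exact ⟨r, s, hcp.trans hpr, hrs, hsq.trans hqd, hbij'.comp hbij''⟩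

section Branches

variable {ι : Type*} {a b : ι → ℝ} {s : Set ℝ}

theorem iUnion_Ioo_mem_nhdsLT (hfin : (s \ ⋃ j, Ioo (a j) (b j)).Finite) {t M : ℝ} (htM : t < M)
    (hs : Ioo t M ⊆ s) : (⋃ j, Ioo (a j) (b j)) ∈ 𝓝[<] M := by
  have hnhds : ((s \ ⋃ j, Ioo (a j) (b j)) \ {M})ᶜ ∈ 𝓝 M :=
    hfin.sdiff.isClosed.isOpen_compl.mem_nhds (by simp)
  filter_upwards [Ioo_mem_nhdsLT htM, mem_nhdsWithin_of_mem_nhds hnhds, self_mem_nhdsWithin]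
    with x hx hxF hxM
  by_contra hxU
  exact hxF ⟨⟨hs hx, hxU⟩, ne_of_lt hxM⟩

theorem exists_branch_lt_le
    (hdisj : Pairwise fun i j => Disjoint (Ioo (a i) (b i)) (Ioo (a j) (b j)))
    (hfin : (s \ ⋃ j, Ioo (a j) (b j)).Finite) {t M : ℝ} (htM : t < M) (hs : Ioo t M ⊆ s) :
    ∃ j, a j < M ∧ M ≤ b j := by
  obtain ⟨t', ht'M, ht'⟩ := mem_nhdsLT_iff_exists_Ioo_subset.1 (iUnion_Ioo_mem_nhdsLT hfin htM hs)
  obtain ⟨j, hj⟩ := isPreconnected_Ioo.exists_subset_of_subset_iUnion (nonempty_Ioo.2 ht'M)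
    (fun j => isOpen_Ioo) hdisj ht'
  obtain ⟨hat', hMb⟩ := (Ioo_subset_Ioo_iff ht'M).1 hj
  exact ⟨j, hat'.trans_lt ht'M, hMb⟩

theorem exists_half_subset_branch
    (hdisj : Pairwise fun i j => Disjoint (Ioo (a i) (b i)) (Ioo (a j) (b j)))
    (hfin : (s \ ⋃ j, Ioo (a j) (b j)).Finite) {A B : ℝ} (hAB : A < B) (hs : Ioo A B ⊆ s)
    (hno : ∀ j, ¬Ioo (a j) (b j) ⊆ Ioo A B) :
    ∃ g g' j, g < g' ∧ Ioo g g' ⊆ Ioo A B ∧ Ioo g g' ⊆ Ioo (a j) (b j) ∧ (B - A) / 2 ≤ g' - g := by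
  set M := (A + B) / 2 with hM
  have hAM : A < M := by linarith [hM]
  have hMB : M < B := by linarith [hM]
  obtain ⟨j, haM, hMb⟩ :=
    exists_branch_lt_le hdisj hfin hAM ((Ioo_subset_Ioo_right hMB.le).trans hs)
  have hout : a j < A ∨ B < b j := by
    have := hno j
    rw [Ioo_subset_Ioo_iff (haM.trans_le hMb), not_and_or, not_le, not_le] at this
    exact this
  rcases hout with haA | hBb
  · exact ⟨A, M, j, hAM, Ioo_subset_Ioo_right hMB.le, Ioo_subset_Ioo haA.le hMb, by linarith [hM]⟩
  · exact ⟨M, B, j, hMB, Ioo_subset_Ioo_left hAM.le, Ioo_subset_Ioo haM.le hBb.le, by linarith [hM]⟩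

end Branches

structure IsPiecewiseExpanding (f : ℝ → ℝ) (σ : ℝ) {ι : Type*} (a b : ι → ℝ) : Prop where
  lt : ∀ j, a j < b j
  disjoint : Pairwise fun i j => Disjoint (Ioo (a i) (b i)) (Ioo (a j) (b j))
  mapsTo : ∀ j, MapsTo f (Ioo (a j) (b j)) (Icc 0 1)
  differentiableOn : ∀ j, DifferentiableOn ℝ f (Ioo (a j) (b j))
  le_abs_deriv : ∀ j, ∀ x ∈ Ioo (a j) (b j), σ ≤ |deriv f x|
  finite_diff : (Icc 0 1 \ ⋃ j, Ioo (a j) (b j)).Finite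

namespace IsPiecewiseExpanding

variable {f : ℝ → ℝ} {σ : ℝ} {ι : Type*} {a b : ι → ℝ} {c d : ℝ} {j₀ : ι}

theorem continuousOn (hf : IsPiecewiseExpanding f σ a b) (hJ : Ioo c d ⊆ Ioo (a j₀) (b j₀)) :
    ContinuousOn f (Ioo c d) :=
  (hf.differentiableOn j₀).continuousOn.mono hJ

theorem mul_dist_le_dist (hf : IsPiecewiseExpanding f σ a b) {x y : ℝ}
    (hx : x ∈ Ioo (a j₀) (b j₀)) (hy : y ∈ Ioo (a j₀) (b j₀)) : σ * dist x y ≤ dist (f x) (f y) :=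
  mul_dist_le_dist_of_le_abs_deriv ordConnected_Ioo (hf.differentiableOn j₀) (hf.le_abs_deriv j₀)
    hx hy

theorem injOn (hf : IsPiecewiseExpanding f σ a b) (hσ : 0 < σ)
    (hJ : Ioo c d ⊆ Ioo (a j₀) (b j₀)) : InjOn f (Ioo c d) := fun x hx y hy hxy => by
  have := hf.mul_dist_le_dist (hJ hx) (hJ hy)
  rw [hxy, dist_self] at this
  exact dist_le_zero.1 (nonpos_of_mul_nonpos_right this hσ)

theorem exists_image_eq_Ioo (hf : IsPiecewiseExpanding f σ a b) (hσ : 0 < σ) (hcd : c < d)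
    (hJ : Ioo c d ⊆ Ioo (a j₀) (b j₀)) :
    ∃ A B, A < B ∧ f '' Ioo c d = Ioo A B ∧ Ioo A B ⊆ Icc 0 1 ∧ σ * (d - c) ≤ B - A := by
  have hmaps : f '' Ioo c d ⊆ Icc 0 1 := ((hf.mapsTo j₀).mono_left hJ).image_subset
  obtain ⟨A, B, himg⟩ := (hf.continuousOn hJ).exists_image_Ioo_eq_Ioo hcd (hf.injOn hσ hJ)
    ((isBounded_Icc 0 1).subset hmaps)
  have hAB : A < B := by
    obtain ⟨y, hy⟩ := himg ▸ (nonempty_Ioo.2 hcd).image f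
    exact hy.1.trans hy.2
  refine ⟨A, B, hAB, himg, himg ▸ hmaps, ?_⟩
  calc σ * (d - c) = σ * diam (Ioo c d) := by rw [Real.diam_Ioo hcd.le]
    _ ≤ diam (f '' Ioo c d) := mul_diam_le_diam_image hσ (himg ▸ isBounded_Ioo A B)
        fun x hx y hy => hf.mul_dist_le_dist (hJ hx) (hJ hy)
    _ = B - A := by rw [himg, Real.diam_Ioo hAB.le]

theorem covers_branch_or_covers_long (hf : IsPiecewiseExpanding f σ a b) (hσ : 0 < σ)
    (hcd : c < d) (hJ : Ioo c d ⊆ Ioo (a j₀) (b j₀)) :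
    (∃ j, Covers f c d (a j) (b j)) ∨
      ∃ g g' j, Covers f c d g g' ∧ Ioo g g' ⊆ Ioo (a j) (b j) ∧ σ / 2 * (d - c) ≤ g' - g := by
  obtain ⟨A, B, hAB, himg, hsub, hlen⟩ := hf.exists_image_eq_Ioo hσ hcd hJ
  have hsurj : SurjOn f (Ioo c d) (Ioo A B) := himg ▸ surjOn_image f _
  by_cases hbranch : ∃ j, Ioo (a j) (b j) ⊆ Ioo A B
  · obtain ⟨j, hj⟩ := hbranch
    exact Or.inl ⟨j, covers_of_surjOn (hf.continuousOn hJ) (hf.injOn hσ hJ)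
      (hsurj.mono subset_rfl hj) (hf.lt j)⟩
  · obtain ⟨g, g', j, hgg', hgAB, hgj, hglen⟩ :=
      exists_half_subset_branch hf.disjoint hf.finite_diff hAB hsub (not_exists.1 hbranch)
    exact Or.inr ⟨g, g', j, covers_of_surjOn (hf.continuousOn hJ) (hf.injOn hσ hJ)
      (hsurj.mono subset_rfl hgAB) hgg', hgj, by linarith⟩

theorem exists_iterate_covers_branch (hf : IsPiecewiseExpanding f σ a b) (hσ : 2 < σ) (m : ℕ)
    (hJ : Ioo c d ⊆ Ioo (a j₀) (b j₀)) (hlen : 1 < (σ / 2) ^ m * (d - c)) :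
    ∃ k ≤ m, ∃ j, Covers (f^[k]) c d (a j) (b j) := by
  induction m generalizing c d j₀ with
  | zero =>
    rw [pow_zero, one_mul] at hlen
    have hcd : c < d := by linarith
    obtain ⟨A, B, hAB, -, hsub, hlenAB⟩ := hf.exists_image_eq_Ioo (by linarith) hcd hJ
    have hB : B - A ≤ 1 := by
      simpa [Real.diam_Ioo hAB.le, Real.diam_Icc zero_le_one] using
        diam_mono hsub (isBounded_Icc (0 : ℝ) 1)
    nlinarith
  | succ m ih =>
    have hcd : c < d := sub_pos.1 (pos_of_mul_pos_right (one_pos.trans hlen) (by positivity))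
    rcases hf.covers_branch_or_covers_long (by linarith) hcd hJ with
      ⟨j, hcov⟩ | ⟨g, g', j, hcov, hgj, hglen⟩
    · exact ⟨1, by omega, j, hcov⟩
    · have hlen' : 1 < (σ / 2) ^ m * (g' - g) := calc
        1 < (σ / 2) ^ m * (σ / 2 * (d - c)) := by rwa [← mul_assoc, ← pow_succ]
        _ ≤ (σ / 2) ^ m * (g' - g) := by gcongr
      obtain ⟨k, hk, j', hcov'⟩ := ih hgj hlen'
      refine ⟨k + 1, by omega, j', ?_⟩
      rw [Function.iterate_succ]
      exact Covers.comp (hf.continuousOn hJ) (hf.injOn (by linarith) hJ) hcov hcov'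

end IsPiecewiseExpanding

theorem stmt17_general (f : ℝ → ℝ) (σ : ℝ) (hσ : 2 < σ) (l : ℕ)
    (a b : Fin l → ℝ) (hab : ∀ j, a j < b j)
    (hdisj : Pairwise fun i j => Disjoint (Ioo (a i) (b i)) (Ioo (a j) (b j)))
    (hmaps : ∀ j, Set.MapsTo f (Ioo (a j) (b j)) (Icc (0:ℝ) 1))
    (hC1 : ∀ j, ContDiffOn ℝ 1 f (Ioo (a j) (b j)))
    (hexp : ∀ j, ∀ x ∈ Ioo (a j) (b j), σ ≤ |deriv f x|)
    (hfin : Set.Finite (Icc (0:ℝ) 1 \ ⋃ j, Ioo (a j) (b j))) :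
    ∀ δ > (0:ℝ), ∃ n : ℕ, ∀ c d : ℝ, c < d → δ ≤ d - c →
      Ioo c d ⊆ ⋃ j, Ioo (a j) (b j) →
      ∃ k ≤ n, ∃ c' d' : ℝ, c ≤ c' ∧ c' < d' ∧ d' ≤ d ∧
        ∃ j, Set.BijOn (f^[k]) (Ioo c' d') (Ioo (a j) (b j)) := by
  have hf : IsPiecewiseExpanding f σ a b :=
    ⟨hab, hdisj, hmaps, fun j => (hC1 j).differentiableOn one_ne_zero, hexp, hfin⟩
  intro δ hδ
  obtain ⟨n, hn⟩ := pow_unbounded_of_one_lt (1 / δ) (by linarith : (1 : ℝ) < σ / 2)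
  refine ⟨n, fun c d hcd hδd hU => ?_⟩
  obtain ⟨j₀, hj₀⟩ := isPreconnected_Ioo.exists_subset_of_subset_iUnion (nonempty_Ioo.2 hcd)
    (fun j => isOpen_Ioo) hdisj hU
  have hlen : 1 < (σ / 2) ^ n * (d - c) := calc
    1 < (σ / 2) ^ n * δ := by rwa [div_lt_iff₀ hδ] at hn
    _ ≤ (σ / 2) ^ n * (d - c) := by gcongr
  obtain ⟨k, hk, j, c', d', hcc', hc'd', hd'd, hbij⟩ :=
    hf.exists_iterate_covers_branch hσ n hj₀ hlen
  exact ⟨k, hk, c', d', hcc', hc'd', hd'd, j, hbij⟩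

theorem stmt17 (f : ℝ → ℝ) (σ : ℝ) (hσ : 2 < σ) (l : ℕ) (hl : 0 < l)
    (a b : Fin l → ℝ) (hab : ∀ j, a j < b j)
    (hsub : ∀ j, Ioo (a j) (b j) ⊆ Icc (0:ℝ) 1)
    (hdisj : Pairwise fun i j => Disjoint (Ioo (a i) (b i)) (Ioo (a j) (b j)))
    (hmaps : ∀ j, Set.MapsTo f (Ioo (a j) (b j)) (Icc (0:ℝ) 1))
    (hmono : ∀ j, StrictMonoOn f (Ioo (a j) (b j)) ∨ StrictAntiOn f (Ioo (a j) (b j)))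
    (hC1 : ∀ j, ContDiffOn ℝ 1 f (Ioo (a j) (b j)))
    (hexp : ∀ j, ∀ x ∈ Ioo (a j) (b j), σ ≤ |deriv f x|)
    (hfin : Set.Finite (Icc (0:ℝ) 1 \ ⋃ j, Ioo (a j) (b j))) :
    ∀ δ > (0:ℝ), ∃ n : ℕ, ∀ c d : ℝ, c < d → δ ≤ d - c →
      Ioo c d ⊆ ⋃ j, Ioo (a j) (b j) →
      ∃ k ≤ n, ∃ c' d' : ℝ, c ≤ c' ∧ c' < d' ∧ d' ≤ d ∧
        ∃ j, Set.BijOn (f^[k]) (Ioo c' d') (Ioo (a j) (b j)) :=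
  stmt17_general f σ hσ l a b hab hdisj hmaps hC1 hexp hfin
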